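/- arXiv:0906.2995 — 2 statements merged into one kernel-verified Lean document; each statement's English description precedes it below -/
import Mathlib

section
/- Deterministic languages in Γ^∞ are closed under finite union and finite intersection, where a regular language L ⊆ Γ^∞ is called deterministic if L ∩ Γ^ω = →W ∩ Γ^ω for some W ⊆ Γ*. -/
namespace InfWords

variable {Γ : Type}

/-- Finite and infinite words over `Γ`: `Γ^∞ = Γ* ∪ Γ^ω`. -/
abbrev Word (Γ : Type) := List Γ ⊕ (ℕ → Γ)

/-- Prepend a finite word to a finite or infinite word. -/
def wappend (u : List Γ) : Word Γ → Word Γ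
  | Sum.inl v => Sum.inl (u ++ v)
  | Sum.inr f => Sum.inr fun n => if h : n < u.length then u.get ⟨n, h⟩ else f (n - u.length)

/-- The set of finite words `Γ*` inside `Γ^∞`. -/
def finWords (Γ : Type) : Set (Word Γ) := Set.range Sum.inl

/-- The set of infinite words `Γ^ω` inside `Γ^∞`. -/
def infWords (Γ : Type) : Set (Word Γ) := Set.range Sum.inr

/-- The alphabet of a word: the letters occurring in it. -/
def alph : Word Γ → Set Γ
  | Sum.inl u => {a | a ∈ u}
  | Sum.inr f => {a | ∃ n, f n = a}

/-- The imaginary part: letters occurring infinitely often. -/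
def im : Word Γ → Set Γ
  | Sum.inl _ => ∅
  | Sum.inr f => {a | ∀ n, ∃ m, n ≤ m ∧ f m = a}

/-- `A^∞`: words all of whose letters lie in `A`. -/
def infin (A : Set Γ) : Set (Word Γ) := {α | alph α ⊆ A}

/-- The basic set `u A^∞` of the alphabetic topology. -/
def cone (u : List Γ) (A : Set Γ) : Set (Word Γ) := wappend u '' infin A

/-- The alphabetic topology on `Γ^∞`, generated by the sets `u A^∞`. -/
instance alphTop : TopologicalSpace (Word Γ) :=
  TopologicalSpace.generateFrom {S | ∃ u A, S = cone u A}

/-- `cpx A`: words with `alph = im = A`. -/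
def cpx (A : Set Γ) : Set (Word Γ) := {β | alph β = A ∧ im β = A}

/-- The strict alphabetic topology, generated by the sets `u · cpx A`. -/
def strictTopo (Γ : Type) : TopologicalSpace (Word Γ) :=
  TopologicalSpace.generateFrom {S | ∃ u A, S = wappend u '' cpx A}

/-- `u` is a finite prefix of the word `α`. -/
def IsPre (u : List Γ) : Word Γ → Prop
  | Sum.inl v => u <+: v
  | Sum.inr f => ∀ i : Fin u.length, u.get i = f i.1

/-- The arrow language `→W`: every prefix extends to a prefix lying in `W`. -/
def arrow (W : Set (List Γ)) : Set (Word Γ) :=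
  {α | ∀ u, IsPre u α → ∃ v, IsPre (u ++ v) α ∧ u ++ v ∈ W}

/-- The right quotient `L / A^∞`. -/
def quotInf (L : Set (Word Γ)) (A : Set Γ) : Set (List Γ) :=
  {u | ∃ β ∈ infin A, wappend u β ∈ L}

/-- `A^im`: words whose set of letters occurring infinitely often is exactly `A`. -/
def imSet (A : Set Γ) : Set (Word Γ) := {α | im α = A}

/-- `z^ω`, with the convention `1^ω = 1`. -/
def omegaPow : List Γ → Word Γ
  | [] => Sum.inl []
  | a :: l => Sum.inr fun n => (a :: l).get ⟨n % (a :: l).length, Nat.mod_lt n (Nat.succ_pos _)⟩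

/-- The partial products `u v₀ v₁ ⋯ v_{n-1}`. -/
def partialProd (u : List Γ) (v : ℕ → List Γ) (n : ℕ) : List Γ :=
  u ++ ((List.range n).map v).flatten

/-- `α` is the (finite or infinite) product `u v₀ v₁ v₂ ⋯`, with convention `1^ω = 1`. -/
def IsInfProd (u : List Γ) (v : ℕ → List Γ) : Word Γ → Prop
  | Sum.inl w => (∀ n, partialProd u v n <+: w) ∧ ∃ n, partialProd u v n = w
  | Sum.inr f => (∀ n, IsPre (partialProd u v n) (Sum.inr f)) ∧
      ∀ k, ∃ n, k < (partialProd u v n).length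

/-- `h : Γ* → M` is a monoid homomorphism. -/
structure IsHom {M : Type} [Monoid M] (h : List Γ → M) : Prop where
  map_one : h [] = 1
  map_mul : ∀ u v, h (u ++ v) = h u * h v

/-- `[s][e]^ω`: products `u v₀ v₁ ⋯` with `h u = s` and `h vᵢ = e`. -/
def pairSet {M : Type} (h : List Γ → M) (s e : M) : Set (Word Γ) :=
  {α | ∃ u v, h u = s ∧ (∀ i, h (v i) = e) ∧ IsInfProd u v α}

/-- `(s, e)` is a linked pair. -/
def LinkedPair {M : Type} [Monoid M] (s e : M) : Prop := s * e = s ∧ e * e = e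

/-- `h` strongly recognizes `L`. -/
def StronglyRecognizes {M : Type} [Monoid M] (h : List Γ → M) (L : Set (Word Γ)) : Prop :=
  L = ⋃ (s : M) (e : M) (_ : LinkedPair s e ∧ (pairSet h s e ∩ L).Nonempty), pairSet h s e

/-- `L` is regular: strongly recognized by a surjective homomorphism onto a finite monoid. -/
def Regular (L : Set (Word Γ)) : Prop :=
  ∃ (M : Type) (i : Monoid M), Finite M ∧
    ∃ h : List Γ → M, @IsHom Γ M i h ∧ Function.Surjective h ∧ @StronglyRecognizes Γ M i h L

/-- `L` is deterministic. -/
def Deterministic (L : Set (Word Γ)) : Prop :=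
  Regular L ∧ ∃ W : Set (List Γ), L ∩ infWords Γ = arrow W ∩ infWords Γ

/-- The syntactic preorder `u ≤_L v`. -/
def synLe (L : Set (Word Γ)) (u v : List Γ) : Prop :=
  ∀ x y z : List Γ,
    (wappend (x ++ v ++ y) (omegaPow z) ∈ L → wappend (x ++ u ++ y) (omegaPow z) ∈ L) ∧
    (wappend x (omegaPow (v ++ y)) ∈ L → wappend x (omegaPow (u ++ y)) ∈ L)

/-- The syntactic congruence `u ≡_L v`. -/
def synEq (L : Set (Word Γ)) (u v : List Γ) : Prop := synLe L u v ∧ synLe L v u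

/-- `[s][e]^ω` for syntactic classes represented by words `s`, `e`. -/
def pairSetSyn (L : Set (Word Γ)) (s e : List Γ) : Set (Word Γ) :=
  {α | ∃ u v, synEq L u s ∧ (∀ i, synEq L (v i) e) ∧ IsInfProd u v α}

/-- `s` represents an element of `M_e` in the syntactic monoid of `L`:
`s` is a product of words each of which is a factor of (something equivalent to) `e`. -/
def InMe (L : Set (Word Γ)) (e s : List Γ) : Prop :=
  ∃ parts : List (List Γ), s = parts.flatten ∧ ∀ p ∈ parts, ∃ x y, synEq L (x ++ p ++ y) e

/-- Glue a factorization `u₁ a₁ u₂ a₂ ⋯ u_k a_k` into a single finite word. -/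
def glue : List (List Γ) → List (Set Γ × Γ) → List Γ
  | x :: xs, p :: l => x ++ p.2 :: glue xs l
  | _, _ => []

/-- `(us, β)` is a factorization of `α` as `u₁ a₁ ⋯ u_k a_k β` with `uᵢ ∈ Aᵢ*`, `β ∈ B^∞`. -/
def IsFactorization (l : List (Set Γ × Γ)) (B : Set Γ) (us : List (List Γ)) (β : Word Γ)
    (α : Word Γ) : Prop :=
  us.length = l.length ∧
  (∀ (i : ℕ) (h1 : i < us.length) (h2 : i < l.length),
    ∀ c ∈ us.get ⟨i, h1⟩, c ∈ (l.get ⟨i, h2⟩).1) ∧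
  β ∈ infin B ∧ α = wappend (glue us l) β

/-- The monomial `A₁* a₁ ⋯ A_k* a_k B^∞`. -/
def monomial (l : List (Set Γ × Γ)) (B : Set Γ) : Set (Word Γ) :=
  {α | ∃ us β, IsFactorization l B us β α}

/-- The monomial given by `(l, B)` is unambiguous. -/
def Unambiguous (l : List (Set Γ × Γ)) (B : Set Γ) : Prop :=
  ∀ α us β us' β', IsFactorization l B us β α → IsFactorization l B us' β' α →
    us = us' ∧ β = β'

/-- `L` is a polynomial: a finite union of monomials. -/
def IsPolynomial (L : Set (Word Γ)) : Prop :=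
  ∃ ms : List (List (Set Γ × Γ) × Set Γ), L = {α | ∃ m ∈ ms, α ∈ monomial m.1 m.2}

/-- The set of marker letters of a monomial. -/
def sndSet (l : List (Set Γ × Γ)) : Set Γ := {a | ∃ p ∈ l, p.2 = a}

/-- `M_e`: the submonoid generated by the factors of the idempotent `e`. -/
def Msub {M : Type} [Monoid M] (e : M) : Submonoid M :=
  Submonoid.closure {t | ∃ x y, x * t * y = e}

/-- The variety `DA`: `ese = e` for all idempotents `e` and all `s ∈ M_e`. -/
def IsDA (M : Type) [Monoid M] : Prop :=
  ∀ e : M, e * e = e → ∀ s ∈ Msub e, e * s * e = e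

end InfWords

/-! Regularity: the image of `Γ*` in the product of the finite monoids recognizing `L` and `K`
saturates both languages, hence their union and intersection; by Ramsey's theorem every word
has a linked-pair factorization over it, so saturation amounts to strong recognition.

Determinism: an infinite word lies in `→W` iff infinitely many of its prefixes lie in `W`.
Hence `→(W ∪ V)` handles the union, and for the intersection one keeps the prefixes in `V`
reached through a prefix in `W` since the previous prefix in `V`. -/

open Filter

theorem Set.Infinite.exists_infinite_fiber {α C : Type*} [Finite C] {X : Set α}
    (hX : X.Infinite) (g : α → C) : ∃ d, {x ∈ X | g x = d}.Infinite := by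
  by_contra! h
  exact hX ((Set.finite_iUnion h).subset fun x hx => Set.mem_iUnion.2 ⟨g x, hx, rfl⟩)

theorem exists_strictMono_forall_lt_eq_left {C : Type*} [Finite C] (c : ℕ → ℕ → C) :
    ∃ a : ℕ → ℕ, StrictMono a ∧ ∃ d : ℕ → C, ∀ i j, i < j → c (a i) (a j) = d i := by
  have step : ∀ X : {X : Set ℕ // X.Infinite}, ∃ Y : {Y : Set ℕ // Y.Infinite},
      Y.1 ⊆ X.1 ∧ (∀ y ∈ Y.1, sInf X.1 < y) ∧ ∃ d, ∀ y ∈ Y.1, c (sInf X.1) y = d := by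
    rintro ⟨X, hX⟩
    obtain ⟨d, hd⟩ := (hX.sdiff (Set.finite_Iic (sInf X))).exists_infinite_fiber (c (sInf X))
    exact ⟨⟨_, hd⟩, fun y hy => hy.1.1, fun y hy => not_le.1 hy.1.2, d, fun y hy => hy.2⟩
  choose next hsub hgt d hd using step
  let X : ℕ → {X : Set ℕ // X.Infinite} := fun n => next^[n] ⟨Set.univ, Set.infinite_univ⟩
  have hX_succ : ∀ n, X (n + 1) = next (X n) := fun n => Function.iterate_succ_apply' _ _ _
  have ha_mem : ∀ n, sInf (X n).1 ∈ (X n).1 := fun n => Nat.sInf_mem (X n).2.nonempty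
  have hanti : Antitone fun n => (X n).1 :=
    antitone_nat_of_succ_le fun n => by rw [hX_succ]; exact hsub _
  refine ⟨fun n => sInf (X n).1, strictMono_nat_of_lt_succ fun n => ?_, fun n => d (X n),
    fun i j hij => ?_⟩
  · have h := ha_mem (n + 1)
    simp only [hX_succ] at h ⊢
    exact hgt _ _ h
  · have h : sInf (X j).1 ∈ (X (i + 1)).1 := hanti hij (ha_mem j)
    rw [hX_succ] at h
    exact hd _ _ h

/-- Ramsey's theorem for pairs, with finitely many colours. -/
theorem exists_strictMono_forall_lt_eq {C : Type*} [Finite C] (c : ℕ → ℕ → C) :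
    ∃ ψ : ℕ → ℕ, StrictMono ψ ∧ ∃ ε, ∀ i j, i < j → c (ψ i) (ψ j) = ε := by
  obtain ⟨a, ha, d, hd⟩ := exists_strictMono_forall_lt_eq_left c
  obtain ⟨ε, hε⟩ := Finite.exists_infinite_fiber d
  obtain ⟨φ, hφ, hφε⟩ := extraction_of_frequently_atTop
    (Nat.frequently_atTop_iff_infinite.2 (Set.infinite_coe_iff.1 hε))
  exact ⟨a ∘ φ, ha.comp hφ, ε, fun i j hij => (hd _ _ (hφ hij)).trans (hφε i)⟩

theorem frequently_atTop_first_after_iff {p q : ℕ → Prop} :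
    (∃ᶠ m in atTop, q m ∧ ∃ k ≤ m, p k ∧ ∀ j, k ≤ j → j < m → ¬ q j) ↔
      (∃ᶠ m in atTop, p m) ∧ ∃ᶠ m in atTop, q m := by
  constructor
  · intro h
    refine ⟨?_, h.mono fun m hm => hm.1⟩
    rw [frequently_atTop] at h ⊢
    intro n
    obtain ⟨m₁, hnm₁, hq₁, -⟩ := h n
    obtain ⟨m₂, hm₁₂, -, k, -, hpk, hgap⟩ := h (m₁ + 1)
    have hk : m₁ < k := by
      by_contra! hk
      exact hgap m₁ hk (by omega) hq₁
    exact ⟨k, by omega, hpk⟩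
  · rintro ⟨hp, hq⟩
    rw [frequently_atTop] at hp hq ⊢
    intro n
    classical
    obtain ⟨k, hnk, hpk⟩ := hp n
    have hex : ∃ m, k ≤ m ∧ q m := hq k
    exact ⟨Nat.find hex, hnk.trans (Nat.find_spec hex).1, (Nat.find_spec hex).2, k,
      (Nat.find_spec hex).1, hpk, fun j hkj hj hqj => Nat.find_min hex hj ⟨hkj, hqj⟩⟩

namespace InfWords

variable {Γ : Type}

def pre (f : ℕ → Γ) (n : ℕ) : List Γ := (List.range n).map f

@[simp] theorem length_pre (f : ℕ → Γ) (n : ℕ) : (pre f n).length = n := by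
  simp [pre]

theorem take_pre (f : ℕ → Γ) {k n : ℕ} (h : k ≤ n) : (pre f n).take k = pre f k := by
  rw [pre, ← List.map_take, List.take_range, min_eq_left h, pre]

theorem pre_append_drop_pre (f : ℕ → Γ) {i j : ℕ} (h : i ≤ j) :
    pre f i ++ (pre f j).drop i = pre f j := by
  rw [← take_pre f h, List.take_append_drop]

theorem drop_pre_append_drop_pre (f : ℕ → Γ) {i j k : ℕ} (hij : i ≤ j) (hjk : j ≤ k) :
    (pre f j).drop i ++ (pre f k).drop j = (pre f k).drop i := by
  conv_rhs => rw [← pre_append_drop_pre f hjk]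
  rw [List.drop_append_of_le_length (by simpa using hij)]

theorem isPre_pre (f : ℕ → Γ) (n : ℕ) : IsPre (pre f n) (Sum.inr f) := by
  intro i
  rw [List.get_eq_getElem]
  simp [pre]

theorem isPre_inr_iff (f : ℕ → Γ) (u : List Γ) : IsPre u (Sum.inr f) ↔ u = pre f u.length := by
  refine ⟨fun h => List.ext_get (by simp) fun i h₁ _ => ?_, fun h => ?_⟩
  · rw [h ⟨i, h₁⟩]
    simp [pre, List.get_eq_getElem]
  · rw [h]
    exact isPre_pre f _

theorem inr_mem_arrow_iff (W : Set (List Γ)) (f : ℕ → Γ) :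
    Sum.inr f ∈ arrow W ↔ ∃ᶠ n in atTop, pre f n ∈ W := by
  rw [frequently_atTop]
  constructor
  · intro h n
    obtain ⟨v, hv, hvW⟩ := h (pre f n) (isPre_pre f n)
    rw [isPre_inr_iff] at hv
    exact ⟨(pre f n ++ v).length, by simp, hv ▸ hvW⟩
  · intro h u hu
    rw [isPre_inr_iff] at hu
    obtain ⟨m, hm, hmW⟩ := h u.length
    have hum : u ++ (pre f m).drop u.length = pre f m := by
      nth_rw 1 [hu]
      exact pre_append_drop_pre f hm
    exact ⟨_, by rw [hum]; exact isPre_pre f m, by rw [hum]; exact hmW⟩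

theorem inr_mem_arrow_union_iff (W V : Set (List Γ)) (f : ℕ → Γ) :
    Sum.inr f ∈ arrow (W ∪ V) ↔ Sum.inr f ∈ arrow W ∨ Sum.inr f ∈ arrow V := by
  simp only [inr_mem_arrow_iff, Set.mem_union, frequently_or_distrib]

/-- Between two consecutive prefixes in this language an infinite word visits both `W` and `V`,
and conversely each visit to `W` is followed by one here, at the next visit to `V`. -/
def arrowInter (W V : Set (List Γ)) : Set (List Γ) :=
  {u | u ∈ V ∧ ∃ k ≤ u.length, u.take k ∈ W ∧ ∀ j, k ≤ j → j < u.length → u.take j ∉ V}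

theorem pre_mem_arrowInter_iff (W V : Set (List Γ)) (f : ℕ → Γ) (m : ℕ) :
    pre f m ∈ arrowInter W V ↔
      pre f m ∈ V ∧ ∃ k ≤ m, pre f k ∈ W ∧ ∀ j, k ≤ j → j < m → pre f j ∉ V := by
  simp only [arrowInter, Set.mem_ofPred_eq, length_pre]
  refine and_congr_right' (exists_congr fun k => and_congr_right fun hk => ?_)
  simp +contextual [take_pre f hk, take_pre, le_of_lt]

theorem inr_mem_arrow_arrowInter_iff (W V : Set (List Γ)) (f : ℕ → Γ) :
    Sum.inr f ∈ arrow (arrowInter W V) ↔ Sum.inr f ∈ arrow W ∧ Sum.inr f ∈ arrow V := by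
  simp only [inr_mem_arrow_iff, pre_mem_arrowInter_iff, frequently_atTop_first_after_iff]

theorem inter_infWords_eq_iff {L L' : Set (Word Γ)} :
    L ∩ infWords Γ = L' ∩ infWords Γ ↔ ∀ f, Sum.inr f ∈ L ↔ Sum.inr f ∈ L' := by
  simp [Set.ext_iff, infWords]

section Regular

variable {M N : Type} [Monoid M] [Monoid N]

def Saturates (h : List Γ → M) (L : Set (Word Γ)) : Prop :=
  ∀ s e, LinkedPair s e → (pairSet h s e ∩ L).Nonempty → pairSet h s e ⊆ L

theorem Saturates.union {h : List Γ → M} {L K : Set (Word Γ)} (hL : Saturates h L)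
    (hK : Saturates h K) : Saturates h (L ∪ K) := by
  rintro s e hse ⟨α, hα, hαL | hαK⟩
  · exact (hL s e hse ⟨α, hα, hαL⟩).trans Set.subset_union_left
  · exact (hK s e hse ⟨α, hα, hαK⟩).trans Set.subset_union_right

theorem Saturates.inter {h : List Γ → M} {L K : Set (Word Γ)} (hL : Saturates h L)
    (hK : Saturates h K) : Saturates h (L ∩ K) := by
  rintro s e hse ⟨α, hα, hαL, hαK⟩
  exact Set.subset_inter (hL s e hse ⟨α, hα, hαL⟩) (hK s e hse ⟨α, hα, hαK⟩)

theorem LinkedPair.map (φ : M →* N) {s e : M} (h : LinkedPair s e) : LinkedPair (φ s) (φ e) :=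
  ⟨by rw [← map_mul, h.1], by rw [← map_mul, h.2]⟩

theorem pairSet_subset_pairSet_of_factors {h : List Γ → M} {g : List Γ → N} (φ : M →* N)
    (hg : ∀ u, g u = φ (h u)) (s e : M) : pairSet h s e ⊆ pairSet g (φ s) (φ e) := by
  rintro α ⟨u, v, hu, hv, hα⟩
  exact ⟨u, v, by rw [hg, hu], fun i => by rw [hg, hv], hα⟩

theorem Saturates.of_factors {h : List Γ → M} {g : List Γ → N} {L : Set (Word Γ)} (φ : M →* N)
    (hg : ∀ u, g u = φ (h u)) (hL : Saturates g L) : Saturates h L := by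
  rintro s e hse ⟨α, hα, hαL⟩
  have hsub := pairSet_subset_pairSet_of_factors φ hg s e
  exact hsub.trans (hL _ _ (hse.map φ) ⟨α, hsub hα, hαL⟩)

theorem StronglyRecognizes.saturates {h : List Γ → M} {L : Set (Word Γ)}
    (hL : StronglyRecognizes h L) : Saturates h L := by
  intro s e hse hne α hα
  rw [hL]
  exact Set.mem_iUnion.2 ⟨s, Set.mem_iUnion.2 ⟨e, Set.mem_iUnion.2 ⟨⟨hse, hne⟩, hα⟩⟩⟩

theorem partialProd_succ (u : List Γ) (v : ℕ → List Γ) (n : ℕ) :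
    partialProd u v (n + 1) = partialProd u v n ++ v n := by
  simp [partialProd, List.range_succ]

theorem isInfProd_inr_of_partialProd_eq_pre {u : List Γ} {v : ℕ → List Γ} {f : ℕ → Γ}
    {ψ : ℕ → ℕ} (hψ : StrictMono ψ) (h : ∀ n, partialProd u v n = pre f (ψ n)) :
    IsInfProd u v (Sum.inr f) := by
  refine ⟨fun n => h n ▸ isPre_pre f _, fun k => ⟨k + 1, ?_⟩⟩
  rw [h, length_pre]
  exact Nat.lt_of_lt_of_le k.lt_succ_self (hψ.id_le _)

theorem IsHom.exists_linkedPair_mem_pairSet [Finite M] {h : List Γ → M} (hh : IsHom h)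
    (α : Word Γ) : ∃ s e, LinkedPair s e ∧ α ∈ pairSet h s e := by
  cases α with
  | inl w =>
    have hw : ∀ n, partialProd w (fun _ => []) n = w := by simp [partialProd]
    exact ⟨h w, 1, ⟨mul_one _, mul_one _⟩, w, fun _ => [], rfl, fun _ => hh.map_one,
      fun n => by rw [hw], 0, hw 0⟩
  | inr f =>
    have hseg : ∀ {i j k}, i ≤ j → j ≤ k →
        h ((pre f k).drop i) = h ((pre f j).drop i) * h ((pre f k).drop j) := fun hij hjk => by
      rw [← hh.map_mul, drop_pre_append_drop_pre f hij hjk]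
    obtain ⟨ψ, hψ, e, he⟩ := exists_strictMono_forall_lt_eq fun i j => h ((pre f j).drop i)
    have hψ' := hψ.monotone
    have hee : e * e = e := by
      have h012 := hseg (hψ' (Nat.zero_le 1)) (hψ' (Nat.le_succ 1))
      rwa [he 0 2 (by omega), he 0 1 (by omega), he 1 2 (by omega), eq_comm] at h012
    have hu : h (pre f (ψ 1)) = h (pre f (ψ 0)) * e := by
      rw [← he 0 1 (by omega), ← hh.map_mul, pre_append_drop_pre f (hψ' (Nat.zero_le 1))]
    refine ⟨h (pre f (ψ 1)), e, ⟨by rw [hu, mul_assoc, hee], hee⟩, pre f (ψ 1),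
      fun i => (pre f (ψ (i + 2))).drop (ψ (i + 1)), rfl, fun i => he _ _ (by omega),
      isInfProd_inr_of_partialProd_eq_pre (ψ := fun n => ψ (n + 1))
        (fun a b hab => hψ (by omega)) fun n => ?_⟩
    induction n with
    | zero => simp [partialProd]
    | succ n ih =>
      rw [partialProd_succ, ih]
      exact pre_append_drop_pre f (hψ' (by omega))

theorem IsHom.stronglyRecognizes_iff [Finite M] {h : List Γ → M} (hh : IsHom h)
    {L : Set (Word Γ)} : StronglyRecognizes h L ↔ Saturates h L := by
  refine ⟨StronglyRecognizes.saturates, fun hL => Set.Subset.antisymm (fun α hα => ?_) ?_⟩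
  · obtain ⟨s, e, hse, hαse⟩ := hh.exists_linkedPair_mem_pairSet α
    exact Set.mem_iUnion.2 ⟨s, Set.mem_iUnion.2 ⟨e, Set.mem_iUnion.2 ⟨⟨hse, α, hαse, hα⟩, hαse⟩⟩⟩
  · simp only [Set.iUnion_subset_iff]
    exact fun s e ⟨hse, hne⟩ => hL s e hse hne

def IsHom.toMonoidHom {h : List Γ → M} (hh : IsHom h) : FreeMonoid Γ →* M where
  toFun w := h w.toList
  map_one' := hh.map_one
  map_mul' a b := hh.map_mul a.toList b.toList

theorem regular_of_saturates [Finite M] {h : List Γ → M} (hh : IsHom h)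
    (hs : Function.Surjective h) {L : Set (Word Γ)} (hL : Saturates h L) : Regular L :=
  ⟨M, _, ‹_›, h, hh, hs, hh.stronglyRecognizes_iff.2 hL⟩

theorem Regular.exists_saturates_both {L K : Set (Word Γ)} (hL : Regular L) (hK : Regular K) :
    ∃ (M : Type) (_ : Monoid M) (_ : Finite M) (h : List Γ → M),
      IsHom h ∧ Function.Surjective h ∧ Saturates h L ∧ Saturates h K := by
  obtain ⟨M, _, _, h₁, hom₁, -, hL⟩ := hL
  obtain ⟨N, _, _, h₂, hom₂, -, hK⟩ := hK
  let φ : FreeMonoid Γ →* M × N := hom₁.toMonoidHom.prod hom₂.toMonoidHom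
  refine ⟨MonoidHom.mrange φ, inferInstance, inferInstance,
    fun u => φ.mrangeRestrict (FreeMonoid.ofList u),
    ⟨map_one _, fun u v => by rw [FreeMonoid.ofList_append, map_mul]⟩,
    φ.mrangeRestrict_surjective.comp FreeMonoid.ofList.surjective, ?_, ?_⟩
  · exact (hom₁.stronglyRecognizes_iff.1 hL).of_factors
      ((MonoidHom.fst M N).comp (MonoidHom.mrange φ).subtype) fun u => rfl
  · exact (hom₂.stronglyRecognizes_iff.1 hK).of_factors
      ((MonoidHom.snd M N).comp (MonoidHom.mrange φ).subtype) fun u => rfl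

theorem Regular.union {L K : Set (Word Γ)} (hL : Regular L) (hK : Regular K) :
    Regular (L ∪ K) := by
  obtain ⟨M, _, _, h, hh, hs, hhL, hhK⟩ := hL.exists_saturates_both hK
  exact regular_of_saturates hh hs (hhL.union hhK)

theorem Regular.inter {L K : Set (Word Γ)} (hL : Regular L) (hK : Regular K) :
    Regular (L ∩ K) := by
  obtain ⟨M, _, _, h, hh, hs, hhL, hhK⟩ := hL.exists_saturates_both hK
  exact regular_of_saturates hh hs (hhL.inter hhK)

end Regular

theorem Deterministic.union {L K : Set (Word Γ)} (hL : Deterministic L) (hK : Deterministic K) :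
    Deterministic (L ∪ K) := by
  obtain ⟨hLreg, W, hW⟩ := hL
  obtain ⟨hKreg, V, hV⟩ := hK
  rw [inter_infWords_eq_iff] at hW hV
  refine ⟨hLreg.union hKreg, W ∪ V, inter_infWords_eq_iff.2 fun f => ?_⟩
  rw [Set.mem_union, hW, hV, inr_mem_arrow_union_iff]

theorem Deterministic.inter {L K : Set (Word Γ)} (hL : Deterministic L) (hK : Deterministic K) :
    Deterministic (L ∩ K) := by
  obtain ⟨hLreg, W, hW⟩ := hL
  obtain ⟨hKreg, V, hV⟩ := hK
  rw [inter_infWords_eq_iff] at hW hV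
  refine ⟨hLreg.inter hKreg, arrowInter W V, inter_infWords_eq_iff.2 fun f => ?_⟩
  rw [Set.mem_inter_iff, hW, hV, inr_mem_arrow_arrowInter_iff]

end InfWords

theorem deterministic_union_inter_general (Γ : Type) (L K : Set (InfWords.Word Γ))
    (hL : InfWords.Deterministic L) (hK : InfWords.Deterministic K) :
    InfWords.Deterministic (L ∪ K) ∧ InfWords.Deterministic (L ∩ K) :=
  ⟨hL.union hK, hL.inter hK⟩

theorem deterministic_union_inter (Γ : Type) [Fintype Γ] (L K : Set (InfWords.Word Γ))
    (hL : InfWords.Deterministic L) (hK : InfWords.Deterministic K) :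
    InfWords.Deterministic (L ∪ K) ∧ InfWords.Deterministic (L ∩ K) :=
  deterministic_union_inter_general Γ L K hL hK
end

section
/- Let P = A₁*a₁ ⋯ A_k*a_k A^∞ be an unambiguous monomial. Then the following are equivalent: (1) there is no index i with 1 ≤ i ≤ k such that {a_i, …, a_k} ⊆ A_i; (2) P is closed in the alphabetic topology; (3) P is clopen in the alphabetic topology. -/
/-!
Cones `u A^∞` are open and `wappend u` is an open map, so a neighbourhood of the tail of a word
yields one of the word itself. If no block `{aᵢ, …, a_k}` of markers lies in `Aᵢ`, the monomial
`A₁* a₁ P'` is closed by induction: a point of `A₁^∞` has the open neighbourhood `A₁^∞`, which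
misses the monomial because every element contains a marker outside `A₁`; any other point has a
letter outside `A₁` at a finite position, so only the finitely many prefixes before it can serve
as `u a₁` with `u ∈ A₁*`, and peeling off letters reduces everything to the closedness of `P'`.

Conversely, if `{a_j, …, a_k} ⊆ A_j`, let `w = a₁ ⋯ a_{j-1}` and `z = a_j ⋯ a_k`. The finite
words `w z^(n+1)` lie in the monomial (with `z^n` as the `A_j*`-factor) and accumulate at
`w z^ω`, which does not: a factorization of it forces `z^ω ∈ B^∞`, and then `u_j = 1` and
`u_j = z` give two factorizations. Since monomials are open, closed and clopen agree.
-/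

namespace InfWords

variable {Γ : Type}

open Topology

@[simp] lemma wappend_nil (β : Word Γ) : wappend [] β = β := by
  cases β <;> simp [wappend]

lemma wappend_append (u v : List Γ) (β : Word Γ) :
    wappend (u ++ v) β = wappend u (wappend v β) := by
  cases β with
  | inl w => simp [wappend]
  | inr f =>
    simp only [wappend, Sum.inr.injEq, List.length_append, List.get_eq_getElem]
    funext n
    by_cases hu : n < u.length
    · simp [hu, List.getElem_append_left, show n < u.length + v.length by omega]
    · by_cases huv : n < u.length + v.length
      · simp only [hu, huv, dite_true, show n - u.length < v.length by omega, dite_false]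
        exact List.getElem_append_right (by omega)
      · simp [hu, huv, show ¬ n - u.length < v.length by omega, Nat.sub_sub]

lemma wappend_cons (c : Γ) (u : List Γ) (β : Word Γ) :
    wappend (c :: u) β = wappend [c] (wappend u β) :=
  wappend_append [c] u β

lemma alph_wappend (u : List Γ) (β : Word Γ) :
    alph (wappend u β) = {c | c ∈ u} ∪ alph β := by
  cases β with
  | inl v => ext x; simp [wappend, alph]
  | inr f =>
    ext x
    simp only [wappend, alph, Set.mem_ofPred_eq, Set.mem_union, List.get_eq_getElem]
    constructor
    · rintro ⟨n, hn⟩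
      by_cases h : n < u.length
      · simp only [h, dite_true] at hn
        exact Or.inl (hn ▸ List.getElem_mem h)
      · simp only [h, dite_false] at hn
        exact Or.inr ⟨_, hn⟩
    · rintro (hx | ⟨n, rfl⟩)
      · obtain ⟨i, hi, rfl⟩ := List.getElem_of_mem hx
        exact ⟨i, by simp [hi]⟩
      · exact ⟨u.length + n, by simp⟩

lemma wappend_singleton_inj {c d : Γ} {γ δ : Word Γ} (h : wappend [c] γ = wappend [d] δ) :
    c = d ∧ γ = δ := by
  cases γ with
  | inl v => cases δ <;> simp_all [wappend]
  | inr f =>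
    cases δ with
    | inl w => simp [wappend] at h
    | inr g =>
      simp only [wappend, Sum.inr.injEq, List.length_singleton] at h
      refine ⟨by simpa using congrFun h 0, congrArg _ (funext fun n => ?_)⟩
      simpa using congrFun h (n + 1)

lemma exists_eq_append_of_wappend_eq {u v : List Γ} {γ β : Word Γ}
    (h : wappend u γ = wappend v β) (huv : u.length ≤ v.length) :
    ∃ x, v = u ++ x ∧ γ = wappend x β := by
  induction u generalizing v with
  | nil => exact ⟨v, rfl, by simpa using h⟩
  | cons c u ih =>
    obtain _ | ⟨d, v⟩ := v
    · simp at huv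
    rw [wappend_cons c, wappend_cons d] at h
    obtain ⟨rfl, htail⟩ := wappend_singleton_inj h
    obtain ⟨x, rfl, hγ⟩ := ih htail (by simpa using huv)
    exact ⟨x, rfl, hγ⟩

lemma wappend_injective (u : List Γ) : Function.Injective (wappend u) := fun γ β h => by
  obtain ⟨x, hx, rfl⟩ := exists_eq_append_of_wappend_eq h le_rfl
  simp_all

lemma exists_wappend_of_mem_alph {α : Word Γ} {x : Γ} (hx : x ∈ alph α) :
    ∃ v β, α = wappend v β ∧ x ∈ v := by
  cases α with
  | inl w => exact ⟨w, Sum.inl [], by simp [wappend], hx⟩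
  | inr f =>
    obtain ⟨n, rfl⟩ := hx
    refine ⟨(List.range (n + 1)).map f, Sum.inr fun m => f (n + 1 + m), ?_,
      List.mem_map.2 ⟨n, by simp, rfl⟩⟩
    simp only [wappend, Sum.inr.injEq, List.length_map, List.length_range, List.get_eq_getElem]
    funext m
    by_cases hm : m < n + 1
    · simp [hm]
    · simp [hm, show n + 1 + (m - (n + 1)) = m by omega]

lemma isOpen_cone (u : List Γ) (A : Set Γ) : IsOpen (cone u A) :=
  TopologicalSpace.GenerateOpen.basic _ ⟨u, A, rfl⟩

lemma isOpen_infin (A : Set Γ) : IsOpen (infin A) := by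
  simpa [cone] using isOpen_cone [] A

lemma isOpenMap_wappend (u : List Γ) : IsOpenMap (wappend u) := by
  intro U hU
  induction hU with
  | basic S hS =>
    obtain ⟨v, A, rfl⟩ := hS
    simpa only [cone, Set.image_image, ← wappend_append] using isOpen_cone (u ++ v) A
  | univ => simpa [cone, infin] using isOpen_cone u Set.univ
  | inter U V _ _ hU hV => rw [Set.image_inter (wappend_injective u)]; exact hU.inter hV
  | sUnion S _ ih => rw [Set.sUnion_eq_biUnion, Set.image_iUnion₂]; exact isOpen_biUnion ih

lemma exists_cone_subset_of_isOpen {U : Set (Word Γ)} (hU : IsOpen U) {α : Word Γ}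
    (hα : α ∈ U) : ∃ N, ∀ v β, wappend v β = α → N ≤ v.length → cone v (alph β) ⊆ U := by
  induction hU generalizing α with
  | basic S hS =>
    obtain ⟨u, A, rfl⟩ := hS
    obtain ⟨γ, hγ, rfl⟩ := hα
    refine ⟨u.length, fun v β h hv => ?_⟩
    obtain ⟨x, rfl, rfl⟩ := exists_eq_append_of_wappend_eq h.symm hv
    rintro _ ⟨δ, hδ, rfl⟩
    refine ⟨wappend x δ, ?_, (wappend_append u x δ).symm⟩
    have hγ' : {c | c ∈ x} ∪ alph β ⊆ A := alph_wappend x β ▸ hγ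
    show alph (wappend x δ) ⊆ A
    rw [alph_wappend]
    exact Set.union_subset_union_right _ hδ |>.trans hγ'
  | univ => exact ⟨0, fun _ _ _ _ => Set.subset_univ _⟩
  | inter U V _ _ hU hV =>
    obtain ⟨N₁, h₁⟩ := hU hα.1
    obtain ⟨N₂, h₂⟩ := hV hα.2
    exact ⟨max N₁ N₂, fun v β h hv => Set.subset_inter
      (h₁ v β h (le_of_max_le_left hv)) (h₂ v β h (le_of_max_le_right hv))⟩
  | sUnion S _ ih =>
    obtain ⟨s, hs, hαs⟩ := hα
    obtain ⟨N, hN⟩ := ih s hs hαs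
    exact ⟨N, fun v β h hv => (hN v β h hv).trans (Set.subset_sUnion_of_mem hs)⟩

/-- The language `A* a L`. -/
def starConcat (A : Set Γ) (a : Γ) (L : Set (Word Γ)) : Set (Word Γ) :=
  {α | ∃ u γ, (∀ c ∈ u, c ∈ A) ∧ γ ∈ L ∧ α = wappend (u ++ [a]) γ}

lemma wappend_singleton_mem_starConcat {A : Set Γ} {a x : Γ} {L : Set (Word Γ)} {γ : Word Γ} :
    wappend [x] γ ∈ starConcat A a L ↔ (x = a ∧ γ ∈ L) ∨ (x ∈ A ∧ γ ∈ starConcat A a L) := by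
  constructor
  · rintro ⟨_ | ⟨y, u⟩, δ, hu, hδ, h⟩
    · obtain ⟨rfl, rfl⟩ := wappend_singleton_inj (by simpa using h)
      exact Or.inl ⟨rfl, hδ⟩
    · rw [List.cons_append, wappend_cons y] at h
      obtain ⟨rfl, rfl⟩ := wappend_singleton_inj h
      exact Or.inr ⟨hu x (by simp), u, δ, fun c hc => hu c (by simp [hc]), hδ, rfl⟩
  · rintro (⟨rfl, hγ⟩ | ⟨hx, u, δ, hu, hδ, rfl⟩)
    · exact ⟨[], γ, by simp, hγ, by simp⟩
    · refine ⟨x :: u, δ, ?_, hδ, by rw [List.cons_append, wappend_cons x (u ++ [a])]⟩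
      simpa [hx] using hu

@[simp] lemma glue_nil_right (us : List (List Γ)) : glue us [] = [] := by
  cases us <;> rfl

lemma monomial_nil (B : Set Γ) : monomial [] B = infin B := by
  ext α
  constructor
  · rintro ⟨us, β, -, -, hβ, rfl⟩
    simpa using hβ
  · intro hα
    exact ⟨[], α, rfl, by simp, hα, by simp⟩

lemma monomial_cons (A : Set Γ) (a : Γ) (l : List (Set Γ × Γ)) (B : Set Γ) :
    monomial ((A, a) :: l) B = starConcat A a (monomial l B) := by
  ext α
  constructor
  · rintro ⟨_ | ⟨u, us⟩, β, hlen, hus, hβ, rfl⟩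
    · simp at hlen
    refine ⟨u, wappend (glue us l) β, fun c hc => hus 0 (by simp) (by simp) c hc,
      ⟨us, β, by simpa using hlen, fun i h₁ h₂ => hus (i + 1) (by simpa) (by simpa), hβ, rfl⟩, ?_⟩
    simp [glue, ← wappend_append]
  · rintro ⟨u, _, hu, ⟨us, β, hlen, hus, hβ, rfl⟩, rfl⟩
    refine ⟨u :: us, β, by simpa using hlen, ?_, hβ, by simp [glue, ← wappend_append]⟩
    rintro (_ | i) h₁ h₂
    · exact hu
    · exact hus i (by simpa using h₁) (by simpa using h₂)

lemma sndSet_subset_alph {l : List (Set Γ × Γ)} {B : Set Γ} {α : Word Γ}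
    (hα : α ∈ monomial l B) : sndSet l ⊆ alph α := by
  induction l generalizing α with
  | nil => rintro _ ⟨_, h, _⟩; simp at h
  | cons p l ih =>
    obtain ⟨A, a⟩ := p
    rw [monomial_cons] at hα
    obtain ⟨u, γ, -, hγ, rfl⟩ := hα
    rintro _ ⟨q, hq, rfl⟩
    rw [wappend_append, alph_wappend, alph_wappend]
    rcases List.mem_cons.1 hq with rfl | hq
    · simp
    · exact Or.inr (Or.inr (ih hγ ⟨q, hq, rfl⟩))

lemma compl_starConcat_mem_nhds {A : Set Γ} {a x : Γ} {L : Set (Word Γ)} (hL : IsClosed L)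
    {v : List Γ} {β : Word Γ} (hxv : x ∈ v) (hxA : x ∉ A)
    (hα : wappend v β ∉ starConcat A a L) : (starConcat A a L)ᶜ ∈ 𝓝 (wappend v β) := by
  induction v with
  | nil => simp at hxv
  | cons y v ih =>
    rw [wappend_cons y] at hα ⊢
    rw [wappend_singleton_mem_starConcat] at hα
    refine (isOpenMap_wappend [y]).nhds_le _ (Filter.mem_map.2 ?_)
    have hL' : ∀ᶠ γ in 𝓝 (wappend v β), y = a → γ ∉ L := by
      by_cases hya : y = a
      · filter_upwards [hL.isOpen_compl.mem_nhds fun h => hα (Or.inl ⟨hya, h⟩)] with γ hγ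
        exact fun _ => hγ
      · exact Filter.Eventually.of_forall fun _ h => absurd h hya
    have hS : ∀ᶠ γ in 𝓝 (wappend v β), y ∈ A → γ ∉ starConcat A a L := by
      by_cases hyA : y ∈ A
      · have hxv' : x ∈ v := (List.mem_cons.1 hxv).resolve_left (by rintro rfl; exact hxA hyA)
        filter_upwards [ih hxv' fun h => hα (Or.inr ⟨hyA, h⟩)] with γ hγ
        exact fun _ => hγ
      · exact Filter.Eventually.of_forall fun _ h => absurd h hyA
    filter_upwards [hL', hS] with γ h₁ h₂
    simp only [Set.mem_preimage, Set.mem_compl_iff, wappend_singleton_mem_starConcat]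
    tauto

lemma isClosed_infin (A : Set Γ) : IsClosed (infin A) := by
  refine isOpen_compl_iff.1 (isOpen_iff_forall_mem_open.2 fun α hα => ?_)
  obtain ⟨x, hxα, hxA⟩ := Set.not_subset.1 hα
  obtain ⟨v, β, rfl, hxv⟩ := exists_wappend_of_mem_alph hxα
  refine ⟨cone v Set.univ, ?_, isOpen_cone v _, β, Set.subset_univ _, rfl⟩
  rintro _ ⟨δ, -, rfl⟩ hδ
  exact hxA (hδ (alph_wappend v δ ▸ Or.inl hxv))

lemma isClosed_starConcat {A : Set Γ} {a : Γ} {L : Set (Word Γ)} (hL : IsClosed L)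
    (hdisj : Disjoint (starConcat A a L) (infin A)) : IsClosed (starConcat A a L) := by
  refine isOpen_compl_iff.1 (isOpen_iff_mem_nhds.2 fun α hα => ?_)
  by_cases hαA : α ∈ infin A
  · exact Filter.mem_of_superset ((isOpen_infin A).mem_nhds hαA) hdisj.subset_compl_left
  · obtain ⟨x, hxα, hxA⟩ := Set.not_subset.1 hαA
    obtain ⟨v, β, rfl, hxv⟩ := exists_wappend_of_mem_alph hxα
    exact compl_starConcat_mem_nhds hL hxv hxA hα

lemma isClosed_monomial {l : List (Set Γ × Γ)} {B : Set Γ}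
    (h : ∀ (j : ℕ) (hj : j < l.length), ¬ sndSet (l.drop j) ⊆ (l.get ⟨j, hj⟩).1) :
    IsClosed (monomial l B) := by
  induction l with
  | nil => simpa [monomial_nil] using isClosed_infin B
  | cons p l ih =>
    obtain ⟨A, a⟩ := p
    obtain ⟨b, hb, hbA⟩ := Set.not_subset.1 (h 0 (by simp))
    rw [monomial_cons]
    refine isClosed_starConcat (ih fun j hj => h (j + 1) (by simpa using hj)) ?_
    refine Set.disjoint_left.2 fun α hα hαA => hbA (hαA ?_)
    exact sndSet_subset_alph (B := B) (by rwa [monomial_cons]) (by simpa using hb)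

lemma isOpen_monomial (l : List (Set Γ × Γ)) (B : Set Γ) : IsOpen (monomial l B) := by
  refine isOpen_iff_forall_mem_open.2 ?_
  rintro _ ⟨us, β, hlen, hus, hβ, rfl⟩
  refine ⟨cone (glue us l) B, ?_, isOpen_cone _ _, β, hβ, rfl⟩
  rintro _ ⟨γ, hγ, rfl⟩
  exact ⟨us, γ, hlen, hus, hγ, rfl⟩

lemma wappend_omegaPow_self {z : List Γ} (hz : z ≠ []) : wappend z (omegaPow z) = omegaPow z := by
  obtain ⟨c, z, rfl⟩ := List.exists_cons_of_ne_nil hz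
  simp only [omegaPow, wappend, Sum.inr.injEq, List.get_eq_getElem]
  funext n
  by_cases hn : n < (c :: z).length
  · rw [dif_pos hn]
    congr 1
    exact (Nat.mod_eq_of_lt hn).symm
  · rw [dif_neg hn]
    congr 1
    exact (Nat.mod_eq_sub_mod (not_lt.1 hn)).symm

lemma wappend_flatten_replicate_omegaPow {z : List Γ} (hz : z ≠ []) (k : ℕ) :
    wappend (List.replicate k z).flatten (omegaPow z) = omegaPow z := by
  induction k with
  | zero => simp
  | succ k ih =>
    rw [List.replicate_succ, List.flatten_cons, wappend_append, ih, wappend_omegaPow_self hz]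

lemma glue_replicate_nil (l : List (Set Γ × Γ)) :
    glue (List.replicate l.length []) l = l.map Prod.snd := by
  induction l with
  | nil => rfl
  | cons p l ih => simp [List.replicate_succ, glue, ih]

lemma glue_set_replicate {l : List (Set Γ × Γ)} {j : ℕ} (hj : j < l.length) (zs : List Γ) :
    glue ((List.replicate l.length []).set j zs) l =
      (l.take j).map Prod.snd ++ zs ++ (l.drop j).map Prod.snd := by
  induction l generalizing j with
  | nil => simp at hj
  | cons p l ih =>
    cases j with
    | zero => simp [List.replicate_succ, glue, glue_replicate_nil]
    | succ j => simp [List.replicate_succ, glue, ih (by simpa using hj)]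

lemma isFactorization_set_replicate {l : List (Set Γ × Γ)} {B : Set Γ} {j : ℕ}
    (hj : j < l.length) {zs : List Γ} (hzs : ∀ c ∈ zs, c ∈ (l.get ⟨j, hj⟩).1) {β : Word Γ}
    (hβ : β ∈ infin B) :
    IsFactorization l B ((List.replicate l.length []).set j zs) β
      (wappend ((l.take j).map Prod.snd ++ zs ++ (l.drop j).map Prod.snd) β) := by
  refine ⟨by simp, fun i h₁ h₂ c hc => ?_, hβ, by rw [glue_set_replicate hj]⟩
  rw [List.get_eq_getElem, List.getElem_set] at hc
  split_ifs at hc with hji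
  · subst hji
    exact hzs c hc
  · simp at hc

lemma not_isClosed_monomial {l : List (Set Γ × Γ)} {B : Set Γ} (hunamb : Unambiguous l B)
    {j : ℕ} (hj : j < l.length) (hsub : sndSet (l.drop j) ⊆ (l.get ⟨j, hj⟩).1) :
    ¬ IsClosed (monomial l B) := by
  set w := (l.take j).map Prod.snd
  set z := (l.drop j).map Prod.snd
  have hz : z ≠ [] := by simpa [z] using hj
  have hzA : ∀ c ∈ z, c ∈ (l.get ⟨j, hj⟩).1 := fun c hc => by
    obtain ⟨p, hp, rfl⟩ := List.mem_map.1 hc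
    exact hsub ⟨p, hp, rfl⟩
  have hfact : ∀ zs, (∀ c ∈ zs, c ∈ (l.get ⟨j, hj⟩).1) → ∀ β ∈ infin B,
      IsFactorization l B ((List.replicate l.length []).set j zs) β (wappend (w ++ zs ++ z) β) :=
    fun _ hzs _ hβ => isFactorization_set_replicate hj hzs hβ
  have hpow : ∀ k, wappend (w ++ (List.replicate k z).flatten ++ z) (omegaPow z) =
      wappend w (omegaPow z) := fun k => by
    simp only [wappend_append, wappend_omegaPow_self hz, wappend_flatten_replicate_omegaPow hz]
  have hpowA : ∀ k, ∀ c ∈ (List.replicate k z).flatten, c ∈ (l.get ⟨j, hj⟩).1 := fun k c hc => by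
    obtain ⟨_, hs, hc⟩ := List.mem_flatten.1 hc
    exact hzA c (List.eq_of_mem_replicate hs ▸ hc)
  have hlen : ∀ k, k ≤ (w ++ (List.replicate k z).flatten ++ z).length := fun k => by
    have : 0 < z.length := List.length_pos_iff.2 hz
    simp only [List.length_append, List.length_flatten, List.map_replicate, List.sum_replicate,
      smul_eq_mul]
    nlinarith
  have hnot : wappend w (omegaPow z) ∉ monomial l B := by
    rintro ⟨us, β, -, -, hβ, h⟩
    obtain ⟨x, -, rfl⟩ := exists_eq_append_of_wappend_eq (h.symm.trans (hpow _).symm) (hlen _)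
    have hzB : omegaPow z ∈ infin B := fun c hc => hβ (alph_wappend x _ ▸ Or.inr hc)
    have h₁ := hfact [] (by simp) _ hzB
    have h₂ := hfact z hzA _ hzB
    rw [List.append_nil, wappend_append, wappend_omegaPow_self hz] at h₁
    rw [wappend_append, wappend_append, wappend_omegaPow_self hz, wappend_omegaPow_self hz] at h₂
    exact hz (by simpa [hj] using congrArg (·[j]?) (hunamb _ _ _ _ _ h₂ h₁).1)
  intro hcl
  obtain ⟨N, hN⟩ := exists_cone_subset_of_isOpen hcl.isOpen_compl hnot
  refine hN _ _ (hpow N) (hlen N) ⟨Sum.inl [], by simp [infin, alph], rfl⟩ ?_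
  exact ⟨_, _, hfact _ (hpowA N) (Sum.inl []) (by simp [infin, alph])⟩

end InfWords

theorem unambiguous_monomial_closed_tfae_general (Γ : Type)
    (l : List (Set Γ × Γ)) (B : Set Γ) (hunamb : InfWords.Unambiguous l B) :
    ((∀ (j : ℕ) (hj : j < l.length), ¬ InfWords.sndSet (l.drop j) ⊆ (l.get ⟨j, hj⟩).1) ↔
        IsClosed (InfWords.monomial l B)) ∧
      (IsClosed (InfWords.monomial l B) ↔ IsClopen (InfWords.monomial l B)) :=
  ⟨⟨InfWords.isClosed_monomial, fun hcl j hj hsub =>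
      InfWords.not_isClosed_monomial hunamb hj hsub hcl⟩,
    ⟨fun hcl => ⟨hcl, InfWords.isOpen_monomial l B⟩, IsClopen.isClosed⟩⟩

theorem unambiguous_monomial_closed_tfae (Γ : Type) [Fintype Γ]
    (l : List (Set Γ × Γ)) (B : Set Γ) (hunamb : InfWords.Unambiguous l B) :
    ((∀ (j : ℕ) (hj : j < l.length), ¬ InfWords.sndSet (l.drop j) ⊆ (l.get ⟨j, hj⟩).1) ↔
        IsClosed (InfWords.monomial l B)) ∧
      (IsClosed (InfWords.monomial l B) ↔ IsClopen (InfWords.monomial l B)) :=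
  unambiguous_monomial_closed_tfae_general Γ l B hunamb
end
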